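/- For every language of correct protocols PROT, the class CL(1NB_PROT A) of languages accepted by 1NB_PROT-automata is a rational cone closed under union: (1) if L ∈ CL(1NB_PROT A) and L' = T(L) for some finite-state transducer T, then L' ∈ CL(1NB_PROT A); and (2) if L₁, L₂ ∈ CL(1NB_PROT A) are languages over a common alphabet Σ, then L₁ ∪ L₂ ∈ CL(1NB_PROT A). -/

import Mathlib

/-! ### Finite-state transducers -/

/-- A finite-state transducer from alphabet `α` to alphabet `β`, with state type `Q`:
an initial state, a set of accepting states, and a finite set of transitions
`(q, x, y, q')` reading `x ∈ α ∪ {ε}` and writing the word `y ∈ β*`. -/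
structure FST (α β Q : Type) where
  init : Q
  accept : Set Q
  trans : Set (Q × Option α × List β × Q)
  trans_fin : trans.Finite

/-- Paths of a transducer: `T.Path q u v q'` holds iff some sequence of transitions
leads from `q` to `q'` with input labels concatenating to `u` and output labels
concatenating to `v`. -/
inductive FST.Path {α β Q : Type} (T : FST α β Q) : Q → List α → List β → Q → Prop
  | refl (q : Q) : FST.Path T q [] [] q
  | step {q q' q'' : Q} {x : Option α} {y : List β} {u : List α} {v : List β} :
      (q, x, y, q') ∈ T.trans → FST.Path T q' u v q'' →
      FST.Path T q (x.toList ++ u) (y ++ v) q''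

/-- The relation computed by a transducer. -/
def FST.Rel {α β Q : Type} (T : FST α β Q) (u : List α) (v : List β) : Prop :=
  ∃ f ∈ T.accept, T.Path T.init u v f

/-- The image `T(B)` of a language under the relation computed by a transducer. -/
def FST.Img {α β Q : Type} (T : FST α β Q) (B : Set (List α)) : Set (List β) :=
  {v | ∃ u ∈ B, T.Rel u v}

/-- A transducer is deterministic if, for each state `q`, the transitions leaving `q`
either consist of a single transition with input label `ε`, or all have pairwise
distinct input labels, none of which is `ε`. -/
def FST.Det {α β Q : Type} (T : FST α β Q) : Prop :=
  ∀ q : Q,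
    (∃ t ∈ T.trans, t.1 = q ∧ t.2.1 = (none : Option α) ∧
        ∀ t' ∈ T.trans, t'.1 = q → t' = t) ∨
    ((∀ t ∈ T.trans, t.1 = q → t.2.1 ≠ none) ∧
      ∀ t ∈ T.trans, ∀ t' ∈ T.trans, t.1 = q → t'.1 = q → t.2.1 = t'.2.1 → t = t')

/-- Rational dominance: `RatDom A B` iff `A = T(B)` for some finite-state transducer. -/
def RatDom {α β : Type} (A : Set (List α)) (B : Set (List β)) : Prop :=
  ∃ (n : ℕ) (T : FST β α (Fin n)), T.Img B = A

/-! ### Protocols -/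

/-- The protocol alphabet `Γ_wr ∪ Γ_qu ∪ Γ_re` (disjoint union). -/
abbrev PLet (W Q R : Type) := W ⊕ Q ⊕ R

def wrLet {W Q R : Type} (w : W) : PLet W Q R := Sum.inl w
def quLet {W Q R : Type} (q : Q) : PLet W Q R := Sum.inr (Sum.inl q)
def reLet {W Q R : Type} (r : R) : PLet W Q R := Sum.inr (Sum.inr r)

/-- The query block `u q r`. -/
def pblock {W Q R : Type} (u : List W) (q : Q) (r : R) : List (PLet W Q R) :=
  u.map wrLet ++ [quLet q, reLet r]

/-- A word over the protocol alphabet is a protocol (w.r.t. the validity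
relation `valid`) iff it is a concatenation of query blocks `uᵢqᵢrᵢ` with
`valid qᵢ rᵢ`. -/
inductive IsProtocol {W Q R : Type} (valid : Q → R → Prop) : List (PLet W Q R) → Prop
  | nil : IsProtocol valid []
  | block (u : List W) (q : Q) (r : R) (p : List (PLet W Q R)) :
      valid q r → IsProtocol valid p → IsProtocol valid (pblock u q r ++ p)

/-- A language of correct protocols over the alphabets `W = Γ_wr`, `Q = Γ_qu`,
`R = Γ_re`, satisfying axioms (i)-(v). -/
structure ProtLang (W Q R : Type) where
  valid : Q → R → Prop
  prot : Set (List (PLet W Q R))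
  /-- (i) the empty protocol is correct -/
  empty_mem : [] ∈ prot
  /-- (ii) every member is a protocol -/
  mem_protocol : ∀ p ∈ prot, IsProtocol valid p
  /-- (iii) closure under protocol prefixes -/
  prefix_mem : ∀ p₁ p₂ : List (PLet W Q R), p₁ ++ p₂ ∈ prot → IsProtocol valid p₁ → p₁ ∈ prot
  /-- (iv) every query has some valid response extending the protocol -/
  extend : ∀ p ∈ prot, ∀ (u : List W) (q : Q), ∃ r : R, p ++ pblock u q r ∈ prot
  /-- (v) the response to a query is uniquely determined -/
  resp_unique : ∀ (p : List (PLet W Q R)) (u : List W) (q : Q) (r r' : R)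
      (s : List (PLet W Q R)),
      p ++ pblock u q r ∈ prot → p ++ pblock u q r' ++ s ∈ prot → r' = r

/-! ### Automata with an auxiliary data structure -/

/-- Input-tape letters: input letters plus the two endmarkers. -/
inductive EndM (σ : Type) where
  | lt : σ → EndM σ
  | lmark : EndM σ
  | rmark : EndM σ

/-- The input tape `⊢ w ⊣`. -/
def tape {σ : Type} (w : List σ) : List (EndM σ) :=
  EndM.lmark :: (w.map EndM.lt ++ [EndM.rmark])

/-- A one-way automaton equipped with an auxiliary data structure
(a `1NB_PROT`-automaton), over input alphabet `σ`, with state type `S`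
split into writing states (`isWr`) and query states (`¬ isWr`). -/
structure ProtAut (σ W Q R S : Type) where
  isWr : S → Prop
  s₀ : S
  F : Set S
  s₀_not_F : s₀ ∉ F
  transWr : Set (S × Option (EndM σ) × List W × S)
  transQu : Set (S × Q × R × S)
  wr_src : ∀ t ∈ transWr, isWr t.1
  qu_src : ∀ t ∈ transQu, ¬ isWr t.1
  qu_tgt : ∀ t ∈ transQu, isWr t.2.2.2
  transWr_fin : transWr.Finite

/-- Configurations `(s, v, u, p)`: state, unprocessed input, query tape, protocol. -/
abbrev PConfig (σ W Q R S : Type) := S × List (EndM σ) × List W × List (PLet W Q R)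

/-- The move relation of an automaton with an ADS, relative to the language `P`
of correct protocols. -/
inductive ProtStep {σ W Q R S : Type} (M : ProtAut σ W Q R S)
    (P : Set (List (PLet W Q R))) : PConfig σ W Q R S → PConfig σ W Q R S → Prop
  | wr {s s' : S} {a : Option (EndM σ)} {x : List W} {v : List (EndM σ)}
      {u : List W} {p : List (PLet W Q R)} :
      (s, a, x, s') ∈ M.transWr →
      ProtStep M P (s, a.toList ++ v, u, p) (s', v, u ++ x, p)
  | qu {s s' : S} {q : Q} {r : R} {v : List (EndM σ)} {u : List W}
      {p : List (PLet W Q R)} :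
      (s, q, r, s') ∈ M.transQu → p ++ pblock u q r ∈ P →
      ProtStep M P (s, v, u, p) (s', v, [], p ++ pblock u q r)

/-- `M` has an accepting run on `w` that produces the protocol `p`. -/
def ProtAut.AcceptsWith {σ W Q R S : Type} (M : ProtAut σ W Q R S)
    (P : Set (List (PLet W Q R))) (w : List σ) (p : List (PLet W Q R)) : Prop :=
  ∃ sf ∈ M.F,
    Relation.ReflTransGen (ProtStep M P) (M.s₀, tape w, [], []) (sf, [], [], p)

/-- `M` accepts the word `w`. -/
def ProtAut.Accepts {σ W Q R S : Type} (M : ProtAut σ W Q R S)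
    (P : Set (List (PLet W Q R))) (w : List σ) : Prop :=
  ∃ p ∈ P, M.AcceptsWith P w p

/-- The language accepted by `M`. -/
def ProtAut.Lang {σ W Q R S : Type} (M : ProtAut σ W Q R S)
    (P : Set (List (PLet W Q R))) : Set (List σ) :=
  {w | M.Accepts P w}

/-- `M` is deterministic: each configuration has at most one successor. -/
def ProtAut.Deterministic {σ W Q R S : Type} (M : ProtAut σ W Q R S)
    (P : Set (List (PLet W Q R))) : Prop :=
  ∀ c c₁ c₂ : PConfig σ W Q R S, ProtStep M P c c₁ → ProtStep M P c c₂ → c₁ = c₂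

/-- The class of languages over `σ` accepted by `1NB_PROT`-automata. -/
def ProtCL {W Q R : Type} (P : ProtLang W Q R) (σ : Type) : Set (Set (List σ)) :=
  {L | ∃ (n : ℕ) (M : ProtAut σ W Q R (Fin n)), L = M.Lang P.prot}

/-- The class of languages over `σ` accepted by deterministic `1DB_PROT`-automata. -/
def ProtCLdet {W Q R : Type} (P : ProtLang W Q R) (σ : Type) : Set (Set (List σ)) :=
  {L | ∃ (n : ℕ) (M : ProtAut σ W Q R (Fin n)),
    M.Deterministic P.prot ∧ L = M.Lang P.prot}

/-! ### Concatenation and Kleene star of languages -/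

def LangConcat {σ : Type} (L₁ L₂ : Set (List σ)) : Set (List σ) :=
  {w | ∃ u ∈ L₁, ∃ v ∈ L₂, w = u ++ v}

def LangStar {σ : Type} (L : Set (List σ)) : Set (List σ) :=
  {w | ∃ ws : List (List σ), (∀ u ∈ ws, u ∈ L) ∧ w = ws.flatten}

/-!
Both constructions simulate the given automata move by move and write the same protocol.

For a union, a fresh initial state moves silently into either automaton.

For a transducer image `T(L)` with `L` accepted by `M`, the new automaton guesses an input `u`
of `T` letter by letter and runs `M` and `T` on `u` in lockstep. The output of the current move
of `T` is kept in a buffer (its possible contents are the finitely many suffixes of output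
labels) and matched against the real input; `M` only queries with an empty buffer. The end
markers are handled by letting `T` copy them.
-/

open Relation

namespace ProtAut

section Runs

variable {σ W Q R S : Type} {M : ProtAut σ W Q R S} {P : Set (List (PLet W Q R))}

def AcceptsFrom (M : ProtAut σ W Q R S) (P : Set (List (PLet W Q R)))
    (c : PConfig σ W Q R S) (p : List (PLet W Q R)) : Prop :=
  ∃ sf ∈ M.F, ReflTransGen (ProtStep M P) c (sf, [], [], p)

lemma protStep_wr {s s' : S} {a : Option (EndM σ)} {x u u' : List W} {v v' : List (EndM σ)}
    {p : List (PLet W Q R)} (h : (s, a, x, s') ∈ M.transWr)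
    (hv : v = a.toList ++ v') (hu : u' = u ++ x) :
    ProtStep M P (s, v, u, p) (s', v', u', p) := by
  subst hv hu
  exact ProtStep.wr h

lemma protStep_append_input {c c' : PConfig σ W Q R S} (h : ProtStep M P c c')
    (z : List (EndM σ)) :
    ProtStep M P (c.1, c.2.1 ++ z, c.2.2) (c'.1, c'.2.1 ++ z, c'.2.2) := by
  cases h with
  | wr h => exact protStep_wr h (by simp) rfl
  | qu h hp => exact ProtStep.qu h hp

lemma run_append_input {s s' : S} {v v' : List (EndM σ)} {u u' : List W}
    {p p' : List (PLet W Q R)} (h : ReflTransGen (ProtStep M P) (s, v, u, p) (s', v', u', p'))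
    (z : List (EndM σ)) :
    ReflTransGen (ProtStep M P) (s, v ++ z, u, p) (s', v' ++ z, u', p') :=
  h.lift (fun c => (c.1, c.2.1 ++ z, c.2.2)) fun _ _ h => protStep_append_input h z

lemma exists_run_of_run_cons {a : EndM σ} {v : List (EndM σ)} {s s' : S} {u u' : List W}
    {p p' : List (PLet W Q R)}
    (h : ReflTransGen (ProtStep M P) (s, a :: v, u, p) (s', [], u', p')) :
    ∃ s₁ u₁ p₁ s₂ x, ReflTransGen (ProtStep M P) (s, [], u, p) (s₁, [], u₁, p₁) ∧
      (s₁, some a, x, s₂) ∈ M.transWr ∧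
      ReflTransGen (ProtStep M P) (s₂, v, u₁ ++ x, p₁) (s', [], u', p') := by
  generalize hc : ((s, a :: v, u, p) : PConfig σ W Q R S) = c at h
  induction h using ReflTransGen.head_induction_on generalizing s u p with
  | refl => simp [Prod.ext_iff] at hc
  | head hstep hrest ih =>
    cases hstep with
    | @wr s₀ s₀' b x v₀ u₀ p₀ hm =>
      simp only [Prod.mk.injEq] at hc
      obtain ⟨rfl, hv, rfl, rfl⟩ := hc
      cases b with
      | none =>
        obtain ⟨s₁, u₁, p₁, s₂, x₂, h₁, h₂, h₃⟩ := ih (by rw [hv]; rfl)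
        exact ⟨s₁, u₁, p₁, s₂, x₂, .head (ProtStep.wr hm) h₁, h₂, h₃⟩
      | some b =>
        obtain ⟨rfl, rfl⟩ := List.cons.inj hv
        exact ⟨s, u, p, s₀', x, .refl, hm, hrest⟩
    | qu hq hp =>
      simp only [Prod.mk.injEq] at hc
      obtain ⟨rfl, rfl, rfl, rfl⟩ := hc
      obtain ⟨s₁, u₁, p₁, s₂, x₂, h₁, h₂, h₃⟩ := ih rfl
      exact ⟨s₁, u₁, p₁, s₂, x₂, .head (ProtStep.qu hq hp) h₁, h₂, h₃⟩

end Runs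

section Embedding

variable {σ W Q R S S' : Type} {P : Set (List (PLet W Q R))}

structure IsEmbedding (e : S → S') (M : ProtAut σ W Q R S) (M' : ProtAut σ W Q R S') :
    Prop where
  wr_iff : ∀ s a x t, (e s, a, x, t) ∈ M'.transWr ↔ ∃ s', (s, a, x, s') ∈ M.transWr ∧ e s' = t
  qu_iff : ∀ s q r t, (e s, q, r, t) ∈ M'.transQu ↔ ∃ s', (s, q, r, s') ∈ M.transQu ∧ e s' = t
  F_iff : ∀ s, e s ∈ M'.F ↔ s ∈ M.F

namespace IsEmbedding

variable {e : S → S'} {M : ProtAut σ W Q R S} {M' : ProtAut σ W Q R S'}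

lemma protStep {s s' : S} {c c'} (he : IsEmbedding e M M')
    (h : ProtStep M P (s, c) (s', c')) : ProtStep M' P (e s, c) (e s', c') := by
  cases h with
  | wr h => exact ProtStep.wr ((he.wr_iff ..).2 ⟨_, h, rfl⟩)
  | qu h hp => exact ProtStep.qu ((he.qu_iff ..).2 ⟨_, h, rfl⟩) hp

lemma exists_protStep {s : S} {c} {d : PConfig σ W Q R S'} (he : IsEmbedding e M M')
    (h : ProtStep M' P (e s, c) d) :
    ∃ s' c', ProtStep M P (s, c) (s', c') ∧ d = (e s', c') := by
  generalize hd : ((e s, c) : PConfig σ W Q R S') = d₀ at h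
  cases h with
  | wr h =>
    simp only [Prod.mk.injEq] at hd
    obtain ⟨rfl, rfl⟩ := hd
    obtain ⟨s', hm, rfl⟩ := (he.wr_iff ..).1 h
    exact ⟨s', _, ProtStep.wr hm, rfl⟩
  | qu h hp =>
    simp only [Prod.mk.injEq] at hd
    obtain ⟨rfl, rfl⟩ := hd
    obtain ⟨s', hq, rfl⟩ := (he.qu_iff ..).1 h
    exact ⟨s', _, ProtStep.qu hq hp, rfl⟩

lemma exists_run {s : S} {c} {d : PConfig σ W Q R S'} (he : IsEmbedding e M M')
    (h : ReflTransGen (ProtStep M' P) (e s, c) d) :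
    ∃ s' c', ReflTransGen (ProtStep M P) (s, c) (s', c') ∧ d = (e s', c') := by
  induction h with
  | refl => exact ⟨s, c, .refl, rfl⟩
  | tail _ hstep ih =>
    obtain ⟨s₁, c₁, hrun, rfl⟩ := ih
    obtain ⟨s₂, c₂, hstep₁, rfl⟩ := he.exists_protStep hstep
    exact ⟨s₂, c₂, hrun.tail hstep₁, rfl⟩

lemma acceptsFrom_iff {s : S} {c} {p} (he : IsEmbedding e M M') :
    M'.AcceptsFrom P (e s, c) p ↔ M.AcceptsFrom P (s, c) p := by
  constructor
  · rintro ⟨sf, hsf, hrun⟩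
    obtain ⟨sf, c', hrun, hd⟩ := he.exists_run hrun
    simp only [Prod.mk.injEq] at hd
    obtain ⟨rfl, rfl⟩ := hd
    exact ⟨sf, (he.F_iff sf).1 hsf, hrun⟩
  · rintro ⟨sf, hsf, hrun⟩
    exact ⟨e sf, (he.F_iff sf).2 hsf,
      hrun.lift (fun c : PConfig σ W Q R S => (e c.1, c.2)) fun _ _ h => he.protStep h⟩

lemma lang_eq (he : IsEmbedding e M M') (h₀ : e M.s₀ = M'.s₀) : M'.Lang P = M.Lang P := by
  ext w
  change (∃ p ∈ P, M'.AcceptsFrom P (M'.s₀, tape w, [], []) p) ↔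
    ∃ p ∈ P, M.AcceptsFrom P (M.s₀, tape w, [], []) p
  simp only [← h₀, he.acceptsFrom_iff]

end IsEmbedding

abbrev mapTrans {α β S S' : Type} (e : S → S') : S × α × β × S → S' × α × β × S' :=
  Prod.map e (Prod.map id (Prod.map id e))

def relabel (e : S ≃ S') (M : ProtAut σ W Q R S) : ProtAut σ W Q R S' where
  isWr s := M.isWr (e.symm s)
  s₀ := e M.s₀
  F := e.symm ⁻¹' M.F
  s₀_not_F := by simpa using M.s₀_not_F
  transWr := mapTrans e.symm ⁻¹' M.transWr
  transQu := mapTrans e.symm ⁻¹' M.transQu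
  wr_src t ht := M.wr_src _ ht
  qu_src t ht := M.qu_src _ ht
  qu_tgt t ht := by simpa using M.qu_tgt _ ht
  transWr_fin := M.transWr_fin.preimage (e.symm.injective.prodMap
    (Function.injective_id.prodMap (Function.injective_id.prodMap e.symm.injective))).injOn

lemma isEmbedding_relabel (e : S ≃ S') (M : ProtAut σ W Q R S) :
    IsEmbedding e M (M.relabel e) where
  wr_iff s a x t := ⟨fun h => ⟨_, by simpa [relabel] using h, e.apply_symm_apply t⟩,
    by rintro ⟨s', h, rfl⟩; simpa [relabel] using h⟩
  qu_iff s q r t := ⟨fun h => ⟨_, by simpa [relabel] using h, e.apply_symm_apply t⟩,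
    by rintro ⟨s', h, rfl⟩; simpa [relabel] using h⟩
  F_iff s := by simp [relabel]

lemma lang_mem_protCL [Finite S] (M : ProtAut σ W Q R S) (P : ProtLang W Q R) :
    M.Lang P.prot ∈ ProtCL P σ := by
  obtain ⟨n, ⟨e⟩⟩ := Finite.exists_equiv_fin S
  exact ⟨n, M.relabel e, ((isEmbedding_relabel e M).lang_eq rfl).symm⟩

end Embedding

section Union

variable {σ W Q R S₁ S₂ : Type} {P : Set (List (PLet W Q R))}

def union (M₁ : ProtAut σ W Q R S₁) (M₂ : ProtAut σ W Q R S₂) :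
    ProtAut σ W Q R (Option (S₁ ⊕ S₂)) where
  isWr s := s.elim True (Sum.elim M₁.isWr M₂.isWr)
  s₀ := none
  F := (some ∘ Sum.inl) '' M₁.F ∪ (some ∘ Sum.inr) '' M₂.F
  s₀_not_F := by simp
  transWr := {(none, none, [], some (.inl M₁.s₀)), (none, none, [], some (.inr M₂.s₀))} ∪
    mapTrans (some ∘ Sum.inl) '' M₁.transWr ∪ mapTrans (some ∘ Sum.inr) '' M₂.transWr
  transQu := mapTrans (some ∘ Sum.inl) '' M₁.transQu ∪ mapTrans (some ∘ Sum.inr) '' M₂.transQu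
  wr_src := by
    rintro _ (((rfl | rfl) | ⟨t, ht, rfl⟩) | ⟨t, ht, rfl⟩)
    · trivial
    · trivial
    · exact M₁.wr_src t ht
    · exact M₂.wr_src t ht
  qu_src := by
    rintro _ (⟨t, ht, rfl⟩ | ⟨t, ht, rfl⟩)
    · exact M₁.qu_src t ht
    · exact M₂.qu_src t ht
  qu_tgt := by
    rintro _ (⟨t, ht, rfl⟩ | ⟨t, ht, rfl⟩)
    · exact M₁.qu_tgt t ht
    · exact M₂.qu_tgt t ht
  transWr_fin := (((Set.finite_singleton _).insert _).union (M₁.transWr_fin.image _)).union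
    (M₂.transWr_fin.image _)

variable (M₁ : ProtAut σ W Q R S₁) (M₂ : ProtAut σ W Q R S₂)

lemma isEmbedding_union_left : IsEmbedding (some ∘ Sum.inl) M₁ (M₁.union M₂) where
  wr_iff s a x t := by simp [union, eq_comm]
  qu_iff s q r t := by simp [union, eq_comm]
  F_iff s := by simp [union]

lemma isEmbedding_union_right : IsEmbedding (some ∘ Sum.inr) M₂ (M₁.union M₂) where
  wr_iff s a x t := by simp [union, eq_comm]
  qu_iff s q r t := by simp [union, eq_comm]
  F_iff s := by simp [union]

lemma union_protStep_none {c} {d : PConfig σ W Q R (Option (S₁ ⊕ S₂))}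
    (h : ProtStep (M₁.union M₂) P (none, c) d) :
    d = (some (.inl M₁.s₀), c) ∨ d = (some (.inr M₂.s₀), c) := by
  generalize hc : ((none, c) : PConfig σ W Q R (Option (S₁ ⊕ S₂))) = c₀ at h
  cases h with
  | wr h =>
    simp only [Prod.mk.injEq] at hc
    obtain ⟨rfl, rfl⟩ := hc
    simp only [union, Set.mem_union, Set.mem_insert_iff, Set.mem_singleton_iff,
      Set.mem_image, Prod.mk.injEq] at h
    rcases h with ((⟨-, rfl, rfl, rfl⟩ | ⟨-, rfl, rfl, rfl⟩) | ⟨_, -, h, -⟩) | ⟨_, -, h, -⟩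
    all_goals simp_all
  | qu h hp =>
    simp only [Prod.mk.injEq] at hc
    obtain ⟨rfl, rfl⟩ := hc
    simp [union] at h

lemma union_acceptsFrom_none {c} {p} :
    (M₁.union M₂).AcceptsFrom P (none, c) p ↔
      M₁.AcceptsFrom P (M₁.s₀, c) p ∨ M₂.AcceptsFrom P (M₂.s₀, c) p := by
  rw [← (isEmbedding_union_left M₁ M₂).acceptsFrom_iff,
    ← (isEmbedding_union_right M₁ M₂).acceptsFrom_iff]
  constructor
  · rintro ⟨sf, hsf, hrun⟩
    rcases hrun.cases_head with hd | ⟨d, hstep, hrun⟩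
    · obtain rfl : none = sf := congrArg Prod.fst hd
      simp [union] at hsf
    · rcases union_protStep_none M₁ M₂ hstep with rfl | rfl
      · exact Or.inl ⟨sf, hsf, hrun⟩
      · exact Or.inr ⟨sf, hsf, hrun⟩
  · rintro (⟨sf, hsf, hrun⟩ | ⟨sf, hsf, hrun⟩)
    · exact ⟨sf, hsf, .head (protStep_wr (a := none) (x := []) (by simp [union]) rfl
        (List.append_nil _).symm) hrun⟩
    · exact ⟨sf, hsf, .head (protStep_wr (a := none) (x := []) (by simp [union]) rfl
        (List.append_nil _).symm) hrun⟩

lemma lang_union : (M₁.union M₂).Lang P = M₁.Lang P ∪ M₂.Lang P := by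
  ext w
  change (∃ p ∈ P, _) ↔ (∃ p ∈ P, _) ∨ (∃ p ∈ P, _)
  simp only [← exists_or, ← and_or_left]
  exact exists_congr fun p => and_congr_right fun _ => union_acceptsFrom_none M₁ M₂

end Union

end ProtAut

instance {σ : Type} [Finite σ] : Finite (EndM σ) :=
  Finite.of_injective (fun | .lt a => some (some a) | .lmark => none | .rmark => some none)
    (by rintro (_ | _ | _) (_ | _ | _) h <;> simp_all)

namespace FST

section Buffer

variable {α β QT : Type}

lemma Path.snoc {T : FST α β QT} {q q' q'' : QT} {u : List α} {v : List β} {x : Option α}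
    {y : List β} (h : T.Path q u v q') (ht : (q', x, y, q'') ∈ T.trans) :
    T.Path q (u ++ x.toList) (v ++ y) q'' := by
  induction h with
  | refl q => simpa using Path.step ht (Path.refl q'')
  | step hmem _ ih => simpa using Path.step hmem (ih ht)

variable (T : FST α β QT)

def OutSuffix : Set (List β) := {b | b = [] ∨ ∃ τ ∈ T.trans, b <:+ τ.2.2.1}

lemma outSuffix_finite : T.OutSuffix.Finite := by
  refine ((Set.finite_singleton []).union (T.trans_fin.biUnion fun τ _ =>
    (List.finite_toSet τ.2.2.1.tails).subset fun b hb => (List.mem_tails b _).2 hb)).subset ?_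
  rintro b (rfl | ⟨τ, hτ, hb⟩)
  · exact Or.inl rfl
  · exact Or.inr (Set.mem_biUnion hτ hb)

instance : Finite T.OutSuffix := T.outSuffix_finite.to_subtype

def outNil : T.OutSuffix := ⟨[], Or.inl rfl⟩

def outOf {τ : QT × Option α × List β × QT} (h : τ ∈ T.trans) : T.OutSuffix :=
  ⟨τ.2.2.1, Or.inr ⟨τ, h, List.suffix_refl _⟩⟩

@[simp] lemma coe_outNil : (T.outNil : List β) = [] := rfl

@[simp] lemma coe_outOf {τ : QT × Option α × List β × QT} (h : τ ∈ T.trans) :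
    (T.outOf h : List β) = τ.2.2.1 := rfl

lemma mem_outSuffix_of_cons_mem {d : β} {l : List β} (h : d :: l ∈ T.OutSuffix) :
    l ∈ T.OutSuffix := by
  rcases h with h | ⟨τ, hτ, hb⟩
  · simp at h
  · exact Or.inr ⟨τ, hτ, (List.suffix_cons d l).trans hb⟩

/-- On an accepting path, every `ε`-move is followed by a move reading a letter. -/
def NoTrailingEps : Prop :=
  ∀ {t t' f : QT} {y v : List β}, (t, none, y, t') ∈ T.trans → T.Path t' [] v f → f ∉ T.accept

end Buffer

section OnTape

inductive TapeState (QT : Type)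
  | start
  | run (q : QT)
  | done

instance {QT : Type} [Finite QT] : Finite (TapeState QT) :=
  Finite.of_injective (fun | .start => none | .run q => some (some q) | .done => some none)
    (by rintro (_ | _ | _) (_ | _ | _) h <;> simp_all)

variable {σ δ QT : Type} (T : FST σ δ QT)

def onTape [Finite QT] : FST (EndM σ) (EndM δ) (TapeState QT) where
  init := .start
  accept := {.done}
  trans := {(.start, some .lmark, [.lmark], .run T.init)} ∪
    (fun τ => (.run τ.1, τ.2.1.map .lt, τ.2.2.1.map .lt, .run τ.2.2.2)) '' T.trans ∪
    (fun f => (.run f, some .rmark, [.rmark], .done)) '' T.accept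
  trans_fin := ((Set.finite_singleton _).union (T.trans_fin.image _)).union
    ((Set.toFinite _).image _)

variable [Finite QT] {T}

lemma onTape_path_done {u : List (EndM σ)} {v : List (EndM δ)} {s : TapeState QT}
    (h : T.onTape.Path .done u v s) : u = [] ∧ v = [] := by
  cases h with
  | refl => exact ⟨rfl, rfl⟩
  | step hτ _ => rcases hτ with ((h | ⟨_, -, h⟩) | ⟨_, -, h⟩) <;> simp_all

lemma onTape_path_run_done_iff {q : QT} {u' : List (EndM σ)} {v' : List (EndM δ)} :
    T.onTape.Path (.run q) u' v' .done ↔ ∃ f ∈ T.accept, ∃ u v, T.Path q u v f ∧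
      u' = u.map .lt ++ [.rmark] ∧ v' = v.map .lt ++ [.rmark] := by
  constructor
  · generalize hs : TapeState.run q = s
    generalize ht : (TapeState.done : TapeState QT) = t
    intro h
    induction h generalizing q with
    | refl =>
      subst hs
      cases ht
    | step hτ hrest ih =>
      subst hs ht
      rcases hτ with ((h | ⟨τ, hτ, h⟩) | ⟨f, hf, h⟩)
      · simp at h
      · simp only [Prod.mk.injEq, TapeState.run.injEq] at h
        obtain ⟨rfl, rfl, rfl, rfl⟩ := h
        obtain ⟨f, hf, u, v, hpath, rfl, rfl⟩ := ih rfl rfl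
        exact ⟨f, hf, _, _, .step hτ hpath, by cases τ.2.1 <;> simp, by simp⟩
      · simp only [Prod.mk.injEq, TapeState.run.injEq] at h
        obtain ⟨rfl, rfl, rfl, rfl⟩ := h
        obtain ⟨rfl, rfl⟩ := onTape_path_done hrest
        exact ⟨_, hf, [], [], .refl _, rfl, rfl⟩
  · rintro ⟨f, hf, u, v, hpath, rfl, rfl⟩
    induction hpath with
    | refl q =>
      simpa using Path.step (T := T.onTape) (Or.inr ⟨q, hf, rfl⟩)
        (Path.refl (T := T.onTape) .done)
    | @step q q' _ x _ _ _ hτ _ ih =>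
      have := Path.step (T := T.onTape) (Or.inl (Or.inr ⟨_, hτ, rfl⟩)) (ih hf)
      cases x <;> simpa using this

lemma onTape_rel_tape_iff {u' : List (EndM σ)} {w : List δ} :
    T.onTape.Rel u' (tape w) ↔ ∃ u, u' = tape u ∧ T.Rel u w := by
  constructor
  · rintro ⟨_, rfl, h⟩
    generalize hV : tape w = V at h
    cases h with
    | step hτ hrest =>
      rcases hτ with ((h | ⟨_, -, h⟩) | ⟨_, -, h⟩)
      rotate_left
      · simp [onTape] at h
      · simp [onTape] at h
      simp only [Set.mem_singleton_iff, Prod.mk.injEq] at h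
      obtain ⟨-, rfl, rfl, rfl⟩ := h
      obtain ⟨f, hf, u, v, hpath, rfl, rfl⟩ := onTape_path_run_done_iff.1 hrest
      obtain rfl : w = v := by
        simpa [tape, List.map_inj_right fun _ _ h => EndM.lt.inj h] using hV
      exact ⟨u, rfl, f, hf, hpath⟩
  · rintro ⟨u, rfl, f, hf, hpath⟩
    exact ⟨_, rfl, Path.step (T := T.onTape) (Or.inl (Or.inl rfl))
      (onTape_path_run_done_iff.2 ⟨f, hf, u, w, hpath, rfl, rfl⟩)⟩

lemma onTape_noTrailingEps : T.onTape.NoTrailingEps := by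
  rintro t t' f y v hτ hpath rfl
  rcases hτ with ((h | ⟨τ, -, h⟩) | ⟨_, -, h⟩) <;> simp only [Set.mem_singleton_iff,
    Prod.mk.injEq, reduceCtorEq, false_and, and_false] at h
  obtain ⟨-, -, -, rfl⟩ := h
  obtain ⟨-, -, u, -, -, hu, -⟩ := onTape_path_run_done_iff.1 hpath
  simp at hu

end OnTape

end FST

namespace ProtAut

section Transduce

variable {σ δ W Q R S QT : Type} (M : ProtAut σ W Q R S) (T : FST (EndM σ) (EndM δ) QT)

/-- Moves of the automaton running `M` on the input of `T` while reading the output of `T`: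
a state `(s, t, b)` pairs the states of `M` and `T` with the output `b` of `T` that has not
yet been matched against the input. -/
inductive TransduceWr :
    Set ((S × QT × T.OutSuffix) × Option (EndM δ) × List W × (S × QT × T.OutSuffix))
  | moveM {s s' : S} {t : QT} {x : List W} :
      (s, none, x, s') ∈ M.transWr →
      TransduceWr ((s, t, T.outNil), none, x, (s', t, T.outNil))
  | moveT {s : S} {t t' : QT} {y : List (EndM δ)} (hs : M.isWr s)
      (h : (t, none, y, t') ∈ T.trans) :
      TransduceWr ((s, t, T.outNil), none, [], (s, t', T.outOf h))
  | read {s s' : S} {t t' : QT} {a : EndM σ} {x : List W} {y : List (EndM δ)}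
      (hM : (s, some a, x, s') ∈ M.transWr) (hT : (t, some a, y, t') ∈ T.trans) :
      TransduceWr ((s, t, T.outNil), none, x, (s', t', T.outOf hT))
  | emit {s : S} {t : QT} {d : EndM δ} {b b' : T.OutSuffix} (h : b.1 = d :: b'.1) :
      TransduceWr ((s, t, b), some d, [], (s, t, b'))

inductive TransduceQu : Set ((S × QT × T.OutSuffix) × Q × R × (S × QT × T.OutSuffix))
  | query {s s' : S} {t : QT} {q : Q} {r : R} :
      (s, q, r, s') ∈ M.transQu → TransduceQu ((s, t, T.outNil), q, r, (s', t, T.outNil))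

def TransduceInv (P : Set (List (PLet W Q R))) (V : List (EndM δ))
    (c : PConfig δ W Q R (S × QT × T.OutSuffix)) : Prop :=
  ∃ u o, T.Path T.init u (o ++ c.1.2.2.1) c.1.2.1 ∧ V = o ++ c.2.1 ∧
    ReflTransGen (ProtStep M P) (M.s₀, u, [], []) (c.1.1, [], c.2.2)

variable [Finite S] [Finite QT] [Finite δ]

def transduce : ProtAut δ W Q R (S × QT × T.OutSuffix) where
  isWr c := M.isWr c.1 ∨ c.2.2.1 ≠ []
  s₀ := (M.s₀, T.init, T.outNil)
  F := {c | c.1 ∈ M.F ∧ c.2.1 ∈ T.accept ∧ c.2.2 = T.outNil}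
  s₀_not_F h := M.s₀_not_F h.1
  transWr := TransduceWr M T
  transQu := TransduceQu M T
  wr_src := by
    rintro _ (⟨hm⟩ | ⟨hs, -⟩ | ⟨hm, -⟩ | ⟨h⟩)
    · exact Or.inl (M.wr_src _ hm)
    · exact Or.inl hs
    · exact Or.inl (M.wr_src _ hm)
    · exact Or.inr (by simp [h])
  qu_src := by
    rintro _ ⟨hq⟩
    simpa using M.qu_src _ hq
  qu_tgt := by
    rintro _ ⟨hq⟩
    exact Or.inl (M.qu_tgt _ hq)
  transWr_fin := by
    refine (Set.finite_univ.prod (Set.finite_univ.prod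
      (((M.transWr_fin.image fun τ => τ.2.2.1).insert []).prod Set.finite_univ))).subset ?_
    rintro _ (⟨hm⟩ | ⟨-, -⟩ | ⟨hm, -⟩ | ⟨-⟩) <;>
      simp only [Set.mem_prod, Set.mem_univ, Set.mem_insert_iff, Set.mem_image, true_and,
        and_true]
    · exact Or.inr ⟨_, hm, rfl⟩
    · exact Or.inl trivial
    · exact Or.inr ⟨_, hm, rfl⟩
    · exact Or.inl trivial

variable {M T} {P : Set (List (PLet W Q R))}

lemma transduce_run_emit {s : S} {t : QT} {V : List (EndM δ)} {u : List W}
    {p : List (PLet W Q R)} (b : T.OutSuffix) :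
    ReflTransGen (ProtStep (M.transduce T) P) ((s, t, b), b.1 ++ V, u, p)
      ((s, t, T.outNil), V, u, p) := by
  obtain ⟨l, hl⟩ := b
  induction l with
  | nil => exact .refl
  | cons d l ih =>
    have hemit := TransduceWr.emit (M := M) (s := s) (t := t) (b := ⟨d :: l, hl⟩)
      (b' := ⟨l, T.mem_outSuffix_of_cons_mem hl⟩) rfl
    exact .head (protStep_wr hemit rfl (List.append_nil u).symm) (ih _)

lemma transduce_run_of_run_nil {s s' : S} {t : QT} {V : List (EndM δ)} {u u' : List W}
    {p p' : List (PLet W Q R)}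
    (h : ReflTransGen (ProtStep M P) (s, [], u, p) (s', [], u', p')) :
    ReflTransGen (ProtStep (M.transduce T) P) ((s, t, T.outNil), V, u, p)
      ((s', t, T.outNil), V, u', p') := by
  generalize hc : ((s, [], u, p) : PConfig σ W Q R S) = c at h
  induction h using ReflTransGen.head_induction_on generalizing s u p with
  | refl =>
    simp only [Prod.mk.injEq] at hc
    obtain ⟨rfl, -, rfl, rfl⟩ := hc
    exact .refl
  | head hstep _ ih =>
    cases hstep with
    | @wr _ _ a _ _ _ _ hm =>
      simp only [Prod.mk.injEq] at hc
      obtain ⟨rfl, hv, rfl, rfl⟩ := hc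
      cases a with
      | none =>
        exact .head (protStep_wr (TransduceWr.moveM hm) rfl rfl) (ih (by simpa using hv))
      | some a => simp at hv
    | qu hq hp =>
      simp only [Prod.mk.injEq] at hc
      obtain ⟨rfl, rfl, rfl, rfl⟩ := hc
      exact .head (ProtStep.qu (TransduceQu.query hq) hp) (ih rfl)

/-- Each move of `T` is simulated once `M` has made the input-free moves preceding its next
reading move; an `ε`-move of `T` uses the writing state that `M` reaches there. -/
lemma transduce_run_of_path (hT : T.NoTrailingEps) {t f : QT} {u : List (EndM σ)}
    {V : List (EndM δ)} (hpath : T.Path t u V f) (hf : f ∈ T.accept) {s sf : S}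
    {uw : List W} {p pf : List (PLet W Q R)}
    (hrun : ReflTransGen (ProtStep M P) (s, u, uw, p) (sf, [], [], pf)) :
    ReflTransGen (ProtStep (M.transduce T) P) ((s, t, T.outNil), V, uw, p)
      ((sf, f, T.outNil), [], [], pf) := by
  induction hpath generalizing s uw p with
  | refl => exact transduce_run_of_run_nil hrun
  | @step t t' f x y u' V' hτ hpath' ih =>
    cases x with
    | none =>
      cases u' with
      | nil => exact absurd hf (hT hτ hpath')
      | cons a u'' =>
        obtain ⟨s₁, u₁, p₁, s₂, x, heps, hm, hrest⟩ := exists_run_of_run_cons hrun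
        refine (transduce_run_of_run_nil heps).trans (.head (protStep_wr
          (TransduceWr.moveT (M.wr_src _ hm) hτ) rfl (List.append_nil u₁).symm) ?_)
        exact (transduce_run_emit (T.outOf hτ)).trans (ih hf (.head (ProtStep.wr hm) hrest))
    | some a =>
      obtain ⟨s₁, u₁, p₁, s₂, x, heps, hm, hrest⟩ := exists_run_of_run_cons hrun
      refine (transduce_run_of_run_nil heps).trans
        (.head (protStep_wr (TransduceWr.read hm hτ) rfl rfl) ?_)
      exact (transduce_run_emit (T.outOf hτ)).trans (ih hf hrest)

lemma TransduceInv.protStep {V : List (EndM δ)}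
    {c c' : PConfig δ W Q R (S × QT × T.OutSuffix)} (hc : TransduceInv M T P V c)
    (h : ProtStep (M.transduce T) P c c') : TransduceInv M T P V c' := by
  obtain ⟨u, o, hpath, hV, hrun⟩ := hc
  cases h with
  | wr h =>
    cases h with
    | moveM hm => exact ⟨u, o, hpath, hV, hrun.tail (protStep_wr hm rfl rfl)⟩
    | moveT _ hτ => exact ⟨u, o, by simpa using hpath.snoc hτ, hV, by simpa using hrun⟩
    | @read _ _ _ _ a _ _ hm hτ =>
      refine ⟨u ++ [a], o, by simpa using hpath.snoc hτ, hV, ?_⟩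
      exact (run_append_input hrun [a]).tail (protStep_wr hm rfl rfl)
    | @emit _ _ d _ _ hb =>
      refine ⟨u, o ++ [d], ?_, by simpa using hV, by simpa using hrun⟩
      simpa [hb] using hpath
  | qu h hp =>
    cases h with
    | query hq => exact ⟨u, o, hpath, hV, hrun.tail (ProtStep.qu hq hp)⟩

lemma TransduceInv.run {V : List (EndM δ)} {c c' : PConfig δ W Q R (S × QT × T.OutSuffix)}
    (hc : TransduceInv M T P V c) (h : ReflTransGen (ProtStep (M.transduce T) P) c c') :
    TransduceInv M T P V c' := by
  induction h with
  | refl => exact hc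
  | tail _ hstep ih => exact ih.protStep hstep

lemma transduce_acceptsFrom_iff (hT : T.NoTrailingEps) {V : List (EndM δ)}
    {p : List (PLet W Q R)} :
    (M.transduce T).AcceptsFrom P ((M.transduce T).s₀, V, [], []) p ↔
      ∃ u, T.Rel u V ∧ M.AcceptsFrom P (M.s₀, u, [], []) p := by
  constructor
  · rintro ⟨⟨sf, f, b⟩, ⟨hsf, hf, rfl⟩, hrun⟩
    have hinit : TransduceInv M T P V ((M.transduce T).s₀, V, [], []) :=
      ⟨[], [], by simpa [transduce] using FST.Path.refl T.init, rfl, .refl⟩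
    obtain ⟨u, o, hpath, rfl, hrunM⟩ := hinit.run hrun
    exact ⟨u, ⟨f, hf, by simpa using hpath⟩, sf, hsf, hrunM⟩
  · rintro ⟨u, ⟨f, hf, hpath⟩, sf, hsf, hrun⟩
    exact ⟨(sf, f, T.outNil), ⟨hsf, hf, rfl⟩, transduce_run_of_path hT hpath hf hrun⟩

end Transduce

lemma lang_transduce_onTape {σ δ W Q R S QT : Type} [Finite S] [Finite QT] [Finite δ]
    {P : Set (List (PLet W Q R))} (M : ProtAut σ W Q R S) (T : FST σ δ QT) :
    (M.transduce T.onTape).Lang P = T.Img (M.Lang P) := by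
  ext w
  change (∃ p ∈ P, (M.transduce T.onTape).AcceptsFrom P (_, tape w, [], []) p) ↔
    ∃ u ∈ M.Lang P, T.Rel u w
  simp only [transduce_acceptsFrom_iff FST.onTape_noTrailingEps, FST.onTape_rel_tape_iff]
  constructor
  · rintro ⟨p, hp, _, ⟨u, rfl, hrel⟩, hacc⟩
    exact ⟨u, ⟨p, hp, hacc⟩, hrel⟩
  · rintro ⟨u, ⟨p, hp, hacc⟩, hrel⟩
    exact ⟨p, hp, _, ⟨u, rfl, hrel⟩, hacc⟩

end ProtAut

theorem stmt19_general {W Q R : Type} (P : ProtLang W Q R) :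
    (∀ (σ δ : Type) (_ : Fintype σ) (_ : Fintype δ) (L : Set (List σ))
        (QT : Type) (_ : Fintype QT) (T : FST σ δ QT),
        L ∈ ProtCL P σ → T.Img L ∈ ProtCL P δ) ∧
    (∀ (σ : Type) (_ : Fintype σ) (L₁ L₂ : Set (List σ)),
        L₁ ∈ ProtCL P σ → L₂ ∈ ProtCL P σ → L₁ ∪ L₂ ∈ ProtCL P σ) := by
  refine ⟨fun σ δ _ _ L QT _ T ⟨n, M, hL⟩ => ?_,
    fun σ _ L₁ L₂ ⟨n₁, M₁, h₁⟩ ⟨n₂, M₂, h₂⟩ => ?_⟩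
  · rw [hL, ← M.lang_transduce_onTape T]
    exact (M.transduce T.onTape).lang_mem_protCL P
  · rw [h₁, h₂, ← M₁.lang_union M₂]
    exact (M₁.union M₂).lang_mem_protCL P

/-- For every language of correct protocols `PROT`, the class of
`1NB_PROT`-recognizable languages is a rational cone closed under union: it is closed
under images of finite-state transducers and under binary union. -/
theorem stmt19 {W Q R : Type} [Fintype W] [Fintype Q] [Fintype R]
    [Nonempty Q] [Nonempty R] (P : ProtLang W Q R) :
    (∀ (σ δ : Type) (_ : Fintype σ) (_ : Fintype δ) (L : Set (List σ))
        (QT : Type) (_ : Fintype QT) (T : FST σ δ QT),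
        L ∈ ProtCL P σ → T.Img L ∈ ProtCL P δ) ∧
    (∀ (σ : Type) (_ : Fintype σ) (L₁ L₂ : Set (List σ)),
        L₁ ∈ ProtCL P σ → L₂ ∈ ProtCL P σ → L₁ ∪ L₂ ∈ ProtCL P σ) :=
  stmt19_general P
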